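/- arXiv:2211.00820 — 4 statements merged into one kernel-verified Lean document; each statement's English description precedes it below -/
import Mathlib

section
/- Let u : Ω → ℝ be 1-Lipschitz and let [x,y] be a transport ray of u. Then for every z in the interior ]x,y[ of the ray, u is differentiable at z, i.e. there is a vector ∇u(z) ∈ ℝ^d with u(w) = u(z) + ⟨∇u(z), w − z⟩ + o(|w − z|) as w → z in Ω, and ∇u(z) = (x − y)/|x − y|. -/
open MeasureTheory Set

noncomputable section

/-- `[x, y]` is a transport ray of `u`: a maximal segment on which the Lipschitz
inequality of `u` is saturated, with upper endpoint `x` and lower endpoint `y`. -/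
def IsTransportRay {d : ℕ} (Ω : Set (EuclideanSpace ℝ (Fin d)))
    (u : EuclideanSpace ℝ (Fin d) → ℝ) (x y : EuclideanSpace ℝ (Fin d)) : Prop :=
  x ∈ Ω ∧ y ∈ Ω ∧ x ≠ y ∧ u x - u y = ‖x - y‖ ∧
  ∀ z w : EuclideanSpace ℝ (Fin d), z ∈ Ω → w ∈ Ω → z ≠ w → u z - u w = ‖z - w‖ →
    segment ℝ x y ⊆ segment ℝ z w → segment ℝ x y = segment ℝ z w

/-! If `u x - u z = ‖x - z‖`, the Lipschitz bound `u w ≥ u x - ‖x - w‖` and the expansion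
`‖a + h‖ ≤ ‖a‖ + ⟪a / ‖a‖, h⟫ + ‖h‖² / (2‖a‖)` bound `u` below near `z` by a paraboloid with
slope `(x - z) / ‖x - z‖`; the lower endpoint `y` bounds it above by a paraboloid with slope
`(z - y) / ‖z - y‖`. On a transport ray both slopes equal `(x - y) / ‖x - y‖`, so `u` is squeezed
between two paraboloids tangent at `z`. -/

open InnerProductSpace RealInnerProductSpace Asymptotics Filter

theorem LipschitzOnWith.sub_le_norm_sub {E : Type*} [SeminormedAddCommGroup E] {s : Set E}
    {u : E → ℝ} (hu : LipschitzOnWith 1 u s) {p q : E} (hp : p ∈ s) (hq : q ∈ s) :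
    u p - u q ≤ ‖p - q‖ := by
  simpa [Real.dist_eq, dist_eq_norm] using (le_abs_self _).trans (hu.dist_le_mul p hp q hq)

variable {E : Type*} [NormedAddCommGroup E] [InnerProductSpace ℝ E]

theorem norm_add_le_add_inner_add_sq {a : E} (ha : a ≠ 0) (h : E) :
    ‖a + h‖ ≤ ‖a‖ + ⟪‖a‖⁻¹ • a, h⟫ + (2 * ‖a‖)⁻¹ * ‖h‖ ^ 2 := by
  have hpos : 0 < ‖a‖ := norm_pos_iff.2 ha
  have amgm : 2 * ‖a‖ * ‖a + h‖ ≤ 2 * ‖a‖ ^ 2 + 2 * ⟪a, h⟫ + ‖h‖ ^ 2 := by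
    nlinarith [norm_add_sq_real a h, sq_nonneg (‖a + h‖ - ‖a‖)]
  rw [real_inner_smul_left, ← mul_le_mul_iff_right₀ (by positivity : 0 < 2 * ‖a‖)]
  refine amgm.trans_eq ?_
  field_simp

theorem hasGradientWithinAt_of_sq_bounds [CompleteSpace E] {f : E → ℝ} {g z : E} {s : Set E}
    {C₁ C₂ : ℝ}
    (hlow : ∀ w ∈ s, ⟪g, w - z⟫ - C₁ * ‖w - z‖ ^ 2 ≤ f w - f z)
    (hup : ∀ w ∈ s, f w - f z ≤ ⟪g, w - z⟫ + C₂ * ‖w - z‖ ^ 2) :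
    HasGradientWithinAt f g s z := by
  rw [hasGradientWithinAt_iff_isLittleO]
  refine IsBigO.trans_isLittleO (g := fun w => ‖w - z‖ ^ 2) ?_
    ((isLittleO_pow_sub_sub z one_lt_two).mono nhdsWithin_le_nhds)
  refine .of_bound (|C₁| + |C₂|) (eventually_nhdsWithin_of_forall fun w hw => ?_)
  have hw2 : 0 ≤ ‖w - z‖ ^ 2 := by positivity
  rw [Real.norm_eq_abs, norm_pow, norm_norm, abs_le]
  constructor
  · nlinarith [hlow w hw, le_abs_self C₁, abs_nonneg C₂]
  · nlinarith [hup w hw, le_abs_self C₂, abs_nonneg C₁]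

section Lipschitz
variable {s : Set E} {u : E → ℝ}

theorem LipschitzOnWith.inner_sub_sq_le_sub_of_sub_eq_norm (hu : LipschitzOnWith 1 u s)
    {x z w : E} (hx : x ∈ s) (hw : w ∈ s) (hxz : x ≠ z) (hsat : u x - u z = ‖x - z‖) :
    ⟪‖x - z‖⁻¹ • (x - z), w - z⟫ - (2 * ‖x - z‖)⁻¹ * ‖w - z‖ ^ 2 ≤ u w - u z := by
  have hnorm := norm_add_le_add_inner_add_sq (sub_ne_zero.2 hxz) (-(w - z))
  rw [inner_neg_right, norm_neg, show x - z + -(w - z) = x - w by abel] at hnorm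
  linarith [hu.sub_le_norm_sub hx hw]

theorem LipschitzOnWith.sub_le_inner_add_sq_of_sub_eq_norm (hu : LipschitzOnWith 1 u s)
    {y z w : E} (hy : y ∈ s) (hw : w ∈ s) (hzy : z ≠ y) (hsat : u z - u y = ‖z - y‖) :
    u w - u z ≤ ⟪‖z - y‖⁻¹ • (z - y), w - z⟫ + (2 * ‖z - y‖)⁻¹ * ‖w - z‖ ^ 2 := by
  have hnorm := norm_add_le_add_inner_add_sq (sub_ne_zero.2 hzy) (w - z)
  rw [show z - y + (w - z) = w - y by abel] at hnorm
  linarith [hu.sub_le_norm_sub hw hy]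

theorem LipschitzOnWith.sub_eq_norm_of_sameRay (hu : LipschitzOnWith 1 u s) {x y z : E}
    (hx : x ∈ s) (hy : y ∈ s) (hz : z ∈ s) (hsat : u x - u y = ‖x - y‖)
    (hray : SameRay ℝ (x - z) (z - y)) :
    u x - u z = ‖x - z‖ ∧ u z - u y = ‖z - y‖ := by
  have hsplit : ‖x - y‖ = ‖x - z‖ + ‖z - y‖ := by
    rw [← hray.norm_add, sub_add_sub_cancel]
  have := hu.sub_le_norm_sub hx hz
  have := hu.sub_le_norm_sub hz hy
  constructor <;> linarith

end Lipschitz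

theorem stmt2_general {d : ℕ} (Ω : Set (EuclideanSpace ℝ (Fin d)))
    (hΩv : Convex ℝ Ω)
    (u : EuclideanSpace ℝ (Fin d) → ℝ) (hu : LipschitzOnWith 1 u Ω)
    (x y : EuclideanSpace ℝ (Fin d)) (hray : IsTransportRay Ω u x y) :
    ∀ z ∈ openSegment ℝ x y, HasGradientWithinAt u (‖x - y‖⁻¹ • (x - y)) Ω z := by
  obtain ⟨hx, hy, hxy, hsat, -⟩ := hray
  intro z hz
  have hzΩ : z ∈ Ω := hΩv.openSegment_subset hx hy hz
  have hxz : x ≠ z := by rintro rfl; exact hxy (left_mem_openSegment_iff.1 hz)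
  have hzy : z ≠ y := by rintro rfl; exact hxy (right_mem_openSegment_iff.1 hz)
  have hsame : SameRay ℝ (x - z) (z - y) := by
    simpa only [neg_sub] using
      (sameRay_of_mem_segment (openSegment_subset_segment ℝ x y hz)).neg
  obtain ⟨hsat_xz, hsat_zy⟩ := hu.sub_eq_norm_of_sameRay hx hy hzΩ hsat hsame
  have hdir_xz : ‖x - z‖⁻¹ • (x - z) = ‖x - y‖⁻¹ • (x - y) := by
    refine SameRay.inv_norm_smul_eq (sub_ne_zero.2 hxz) (sub_ne_zero.2 hxy) ?_
    simpa only [sub_add_sub_cancel] using SameRay.add_right (.refl _) hsame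
  have hdir_zy : ‖z - y‖⁻¹ • (z - y) = ‖x - y‖⁻¹ • (x - y) := by
    refine SameRay.inv_norm_smul_eq (sub_ne_zero.2 hzy) (sub_ne_zero.2 hxy) ?_
    simpa only [sub_add_sub_cancel] using SameRay.add_right hsame.symm (.refl _)
  refine hasGradientWithinAt_of_sq_bounds (C₁ := (2 * ‖x - z‖)⁻¹) (C₂ := (2 * ‖z - y‖)⁻¹)
    (fun w hw => ?_) (fun w hw => ?_)
  · rw [← hdir_xz]; exact hu.inner_sub_sq_le_sub_of_sub_eq_norm hx hw hxz hsat_xz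
  · rw [← hdir_zy]; exact hu.sub_le_inner_add_sq_of_sub_eq_norm hy hw hzy hsat_zy

theorem stmt2 {d : ℕ} (hd : 1 ≤ d) (Ω : Set (EuclideanSpace ℝ (Fin d)))
    (hΩc : IsCompact Ω) (hΩv : Convex ℝ Ω)
    (u : EuclideanSpace ℝ (Fin d) → ℝ) (hu : LipschitzOnWith 1 u Ω)
    (x y : EuclideanSpace ℝ (Fin d)) (hray : IsTransportRay Ω u x y) :
    ∀ z ∈ openSegment ℝ x y, HasGradientWithinAt u (‖x - y‖⁻¹ • (x - y)) Ω z :=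
  stmt2_general Ω hΩv u hu x y hray
end
end

section
/- Let u : Ω → ℝ be 1-Lipschitz and let [x,y] and [x',y'] be two distinct transport rays of u that intersect at a point w. Then either w = x = x' (the intersection point is the upper endpoint of both rays) or w = y = y' (it is the lower endpoint of both rays). -/
open MeasureTheory Set

noncomputable section

/-- Two collinearity memberships from a common interior point force membership. -/
lemma seg_mem_of_le {d : ℕ} {x y y' w : EuclideanSpace ℝ (Fin d)}
    (hw : w ∈ segment ℝ x y) (hw' : w ∈ segment ℝ x y') (hwx : w ≠ x)
    (hle : ‖y' - x‖ ≤ ‖y - x‖) : y' ∈ segment ℝ x y := by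
  have hyx : y ≠ x := by
    intro h
    rw [h, segment_same] at hw
    exact hwx (by simpa using hw)
  rw [segment_eq_image'] at hw hw' ⊢
  obtain ⟨t, ⟨ht0, ht1⟩, hts⟩ := hw
  obtain ⟨s, ⟨hs0, hs1⟩, hss⟩ := hw'
  have hts' : x + t • (y - x) = w := hts
  have hss' : x + s • (y' - x) = w := hss
  have ht : 0 < t := by
    rcases ht0.lt_or_eq with h | h
    · exact h
    · exfalso; apply hwx; rw [← hts', ← h]; simp
  have hs : 0 < s := by
    rcases hs0.lt_or_eq with h | h
    · exact h
    · exfalso; apply hwx; rw [← hss', ← h]; simp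
  have hteq : t • (y - x) = s • (y' - x) := by
    have h := hts'.trans hss'.symm
    exact add_left_cancel h
  have hy' : y' - x = (t / s) • (y - x) := by
    rw [div_eq_inv_mul, mul_smul, hteq, inv_smul_smul₀ hs.ne']
  have hnorm : ‖y' - x‖ = (t / s) * ‖y - x‖ := by
    rw [hy', norm_smul, Real.norm_eq_abs, abs_of_pos (by positivity)]
  have hyxpos : 0 < ‖y - x‖ := by
    rw [norm_pos_iff]; exact sub_ne_zero.mpr hyx
  have hts1 : t / s ≤ 1 := by
    by_contra h
    push_neg at h
    nlinarith
  refine ⟨t / s, ⟨by positivity, hts1⟩, ?_⟩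
  show x + (t / s) • (y - x) = y'
  rw [← hy']; abel

/-- On a saturated segment, `u` splits additively. -/
lemma sat_split {d : ℕ} {Ω : Set (EuclideanSpace ℝ (Fin d))} (hΩv : Convex ℝ Ω)
    {u : EuclideanSpace ℝ (Fin d) → ℝ} (hu : LipschitzOnWith 1 u Ω)
    {a b p : EuclideanSpace ℝ (Fin d)} (ha : a ∈ Ω) (hb : b ∈ Ω)
    (hsat : u a - u b = ‖a - b‖) (hp : p ∈ segment ℝ a b) :
    u a - u p = ‖a - p‖ ∧ u p - u b = ‖p - b‖ := by
  have hpΩ : p ∈ Ω := hΩv.segment_subset ha hb hp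
  have lip : ∀ c ∈ Ω, ∀ e ∈ Ω, u c - u e ≤ ‖c - e‖ := by
    intro c hc e he
    have h := (lipschitzOnWith_iff_dist_le_mul.mp hu) c hc e he
    rw [Real.dist_eq, dist_eq_norm] at h
    calc u c - u e ≤ |u c - u e| := le_abs_self _
    _ ≤ 1 * ‖c - e‖ := h
    _ = ‖c - e‖ := one_mul _
  have hd : dist a p + dist p b = dist a b := dist_add_dist_of_mem_segment hp
  rw [dist_eq_norm, dist_eq_norm, dist_eq_norm] at hd
  have h1 := lip a ha p hpΩ
  have h2 := lip p hpΩ b hb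
  constructor <;> linarith

/-- Two transport rays meeting at a point that is not the upper endpoint of the first nor
the lower endpoint of the second must coincide. -/
lemma rays_eq_of_inter {d : ℕ} {Ω : Set (EuclideanSpace ℝ (Fin d))} (hΩv : Convex ℝ Ω)
    {u : EuclideanSpace ℝ (Fin d) → ℝ} (hu : LipschitzOnWith 1 u Ω)
    {x y x' y' : EuclideanSpace ℝ (Fin d)}
    (hray : IsTransportRay Ω u x y) (hray' : IsTransportRay Ω u x' y')
    {w : EuclideanSpace ℝ (Fin d)} (hw : w ∈ segment ℝ x y) (hw' : w ∈ segment ℝ x' y')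
    (hwx : w ≠ x) (hwy' : w ≠ y') : x = x' ∧ y = y' := by
  obtain ⟨hxΩ, hyΩ, hxy, hsat, hmax⟩ := hray
  obtain ⟨hx'Ω, hy'Ω, hxy', hsat', hmax'⟩ := hray'
  have hwΩ : w ∈ Ω := hΩv.segment_subset hxΩ hyΩ hw
  have lip : ∀ c ∈ Ω, ∀ e ∈ Ω, u c - u e ≤ ‖c - e‖ := by
    intro c hc e he
    have h := (lipschitzOnWith_iff_dist_le_mul.mp hu) c hc e he
    rw [Real.dist_eq, dist_eq_norm] at h
    calc u c - u e ≤ |u c - u e| := le_abs_self _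
    _ ≤ 1 * ‖c - e‖ := h
    _ = ‖c - e‖ := one_mul _
  obtain ⟨h1a, h1b⟩ := sat_split hΩv hu hxΩ hyΩ hsat hw
  obtain ⟨h2a, h2b⟩ := sat_split hΩv hu hx'Ω hy'Ω hsat' hw'
  -- Step 2: x, w, y' aligned, saturated
  have hxwpos : 0 < ‖x - w‖ := by rw [norm_pos_iff]; exact sub_ne_zero.mpr (Ne.symm hwx)
  have hwy'pos : 0 < ‖w - y'‖ := by rw [norm_pos_iff]; exact sub_ne_zero.mpr hwy'
  have htri : ‖x - y'‖ ≤ ‖x - w‖ + ‖w - y'‖ := by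
    have : x - y' = (x - w) + (w - y') := by abel
    rw [this]; exact norm_add_le _ _
  have hlip1 : u x - u y' ≤ ‖x - y'‖ := lip x hxΩ y' hy'Ω
  have hsum : ‖x - w‖ + ‖w - y'‖ = ‖x - y'‖ := by linarith
  have hsatxy' : u x - u y' = ‖x - y'‖ := by linarith
  have hxy'ne : x ≠ y' := by
    intro h
    rw [← h] at hsum
    simp at hsum
    linarith [norm_nonneg (w - x)]
  have hwseg : w ∈ segment ℝ x y' := by
    rw [mem_segment_iff_wbtw, ← dist_add_dist_eq_iff]
    rw [dist_eq_norm, dist_eq_norm, dist_eq_norm]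
    exact hsum
  -- Step 3: y' ∈ segment x y
  have hy'seg : y' ∈ segment ℝ x y := by
    by_cases hc : ‖y' - x‖ ≤ ‖y - x‖
    · exact seg_mem_of_le hw hwseg hwx hc
    · push_neg at hc
      have hyseg : y ∈ segment ℝ x y' := seg_mem_of_le hwseg hw hwx hc.le
      have hsub : segment ℝ x y ⊆ segment ℝ x y' :=
        (convex_segment x y').segment_subset (left_mem_segment ℝ x y') hyseg
      have heq := hmax x y' hxΩ hy'Ω hxy'ne hsatxy' hsub
      rw [heq]; exact right_mem_segment ℝ x y'
  -- Step 4: x ∈ segment x' y'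
  have hxseg' : x ∈ segment ℝ x' y' := by
    have hw'd : w ∈ segment ℝ y' x' := by rwa [segment_symm]
    have hwd : w ∈ segment ℝ y' x := by rwa [segment_symm]
    by_cases hc : ‖x - y'‖ ≤ ‖x' - y'‖
    · have := seg_mem_of_le hw'd hwd hwy' hc
      rwa [segment_symm] at this
    · push_neg at hc
      have hx'seg : x' ∈ segment ℝ y' x := seg_mem_of_le hwd hw'd hwy' hc.le
      rw [segment_symm] at hx'seg
      have hsub : segment ℝ x' y' ⊆ segment ℝ x y' :=
        (convex_segment x y').segment_subset hx'seg (right_mem_segment ℝ x y')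
      have heq := hmax' x y' hxΩ hy'Ω hxy'ne hsatxy' hsub
      rw [heq]; exact left_mem_segment ℝ x y'
  -- Step 5: saturated segment [x', y] containing x
  obtain ⟨h5a, _⟩ := sat_split hΩv hu hx'Ω hy'Ω hsat' hxseg'
  have hxypos : 0 < ‖x - y‖ := by rw [norm_pos_iff]; exact sub_ne_zero.mpr hxy
  have htri2 : ‖x' - y‖ ≤ ‖x' - x‖ + ‖x - y‖ := by
    have : x' - y = (x' - x) + (x - y) := by abel
    rw [this]; exact norm_add_le _ _
  have hlip2 : u x' - u y ≤ ‖x' - y‖ := lip x' hx'Ω y hyΩ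
  have hsum2 : ‖x' - x‖ + ‖x - y‖ = ‖x' - y‖ := by linarith
  have hsatx'y : u x' - u y = ‖x' - y‖ := by linarith
  have hx'ypos : 0 < ‖x' - y‖ := by linarith [norm_nonneg (x' - x)]
  have hx'yne : x' ≠ y := by
    intro h
    rw [h, sub_self, norm_zero] at hx'ypos
    exact lt_irrefl 0 hx'ypos
  have hxsegx'y : x ∈ segment ℝ x' y := by
    rw [mem_segment_iff_wbtw, ← dist_add_dist_eq_iff]
    rw [dist_eq_norm, dist_eq_norm, dist_eq_norm]
    exact hsum2
  -- Step 6: x = x'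
  have hsub1 : segment ℝ x y ⊆ segment ℝ x' y :=
    (convex_segment x' y).segment_subset hxsegx'y (right_mem_segment ℝ x' y)
  have heq1 := hmax x' y hx'Ω hyΩ hx'yne hsatx'y hsub1
  have hx'mem : x' ∈ segment ℝ x y := by rw [heq1]; exact left_mem_segment ℝ x' y
  have e1 : dist x' x + dist x y = dist x' y := dist_add_dist_of_mem_segment hxsegx'y
  have e2 : dist x x' + dist x' y = dist x y := dist_add_dist_of_mem_segment hx'mem
  have hxx' : x = x' := by
    rw [dist_comm x' x] at e1
    have : dist x x' = 0 := by linarith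
    exact dist_eq_zero.mp this
  -- Step 7: y = y'
  have hy'memx'y : y' ∈ segment ℝ x' y := by rw [← heq1]; exact hy'seg
  have hsub2 : segment ℝ x' y' ⊆ segment ℝ x' y :=
    (convex_segment x' y).segment_subset (left_mem_segment ℝ x' y) hy'memx'y
  have heq2 := hmax' x' y hx'Ω hyΩ hx'yne hsatx'y hsub2
  have hymem : y ∈ segment ℝ x' y' := by rw [heq2]; exact right_mem_segment ℝ x' y
  have e3 : dist x' y' + dist y' y = dist x' y := dist_add_dist_of_mem_segment hy'memx'y
  have e4 : dist x' y + dist y y' = dist x' y' := dist_add_dist_of_mem_segment hymem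
  have hyy' : y = y' := by
    rw [dist_comm y' y] at e3
    have : dist y y' = 0 := by linarith
    exact dist_eq_zero.mp this
  exact ⟨hxx', hyy'⟩

theorem stmt4 {d : ℕ} (hd : 1 ≤ d) (Ω : Set (EuclideanSpace ℝ (Fin d)))
    (hΩc : IsCompact Ω) (hΩv : Convex ℝ Ω)
    (u : EuclideanSpace ℝ (Fin d) → ℝ) (hu : LipschitzOnWith 1 u Ω)
    (x y x' y' : EuclideanSpace ℝ (Fin d))
    (hray : IsTransportRay Ω u x y) (hray' : IsTransportRay Ω u x' y')
    (hne : (x, y) ≠ (x', y'))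
    (w : EuclideanSpace ℝ (Fin d)) (hw : w ∈ segment ℝ x y) (hw' : w ∈ segment ℝ x' y') :
    (w = x ∧ w = x') ∨ (w = y ∧ w = y') := by
  have key1 : w = x ∨ w = y' := by
    by_contra h
    push_neg at h
    obtain ⟨h1, h2⟩ := rays_eq_of_inter hΩv hu hray hray' hw hw' h.1 h.2
    exact hne (Prod.ext h1 h2)
  have key2 : w = x' ∨ w = y := by
    by_contra h
    push_neg at h
    obtain ⟨h1, h2⟩ := rays_eq_of_inter hΩv hu hray' hray hw' hw h.1 h.2
    exact hne (Prod.ext h1.symm h2.symm)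
  rcases key1 with h1 | h1 <;> rcases key2 with h2 | h2
  · exact Or.inl ⟨h1, h2⟩
  · exact absurd (h1 ▸ h2 ▸ rfl : x = y) hray.2.2.1
  · exact absurd (h2 ▸ h1 ▸ rfl : x' = y') hray'.2.2.1
  · exact Or.inr ⟨h2, h1⟩
end
end

section
/- Let u0 : Ω → ℝ be 1-Lipschitz and for j ∈ ℕ, j ≥ 1, define A_j = {z ∈ Ω : min(α(z), β(z)) > 1/j}, where α and β measure the distance from z to the lower and upper endpoints of transport rays through z. Then u0 is differentiable at every point of A_j and the map z ↦ ∇u0(z) is Lipschitz continuous on A_j with Lipschitz constant 4j. -/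
/-!
If `min (α z) (β z) > t`, the lower and upper ray endpoints through `z` realise equality in the
triangle inequality, so `u0` grows with unit slope along a segment `[z - t • e, z + t • e] ⊆ Ω`,
`‖e‖ = 1`. Squeezing `u0` between the cones centred at the two ends of that segment gives
`|u0 w - u0 z - ⟪e, w - z⟫| ≤ ‖w - z‖ ^ 2 / t`, hence `∇u0 z = e`. Comparing the ends of the
segments through `x` and `y` crosswise and applying the parallelogram law gives
`t * ‖e_x - e_y‖ ≤ ‖x - y‖`; for `t = 1 / j` this is the Lipschitz bound.
-/

open MeasureTheory Set

noncomputable section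

/-- `rayLow Ω u0 x` (denoted α in the paper): the distance from `x` to the lower
endpoint of a transport ray through `x`. -/
def rayLow {d : ℕ} (Ω : Set (EuclideanSpace ℝ (Fin d)))
    (u0 : EuclideanSpace ℝ (Fin d) → ℝ) (x : EuclideanSpace ℝ (Fin d)) : ℝ :=
  sSup {r | ∃ z ∈ Ω, u0 x - u0 z = ‖x - z‖ ∧ r = ‖x - z‖}

/-- `rayHigh Ω u0 x` (denoted β in the paper): the distance from `x` to the upper
endpoint of a transport ray through `x`. -/
def rayHigh {d : ℕ} (Ω : Set (EuclideanSpace ℝ (Fin d)))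
    (u0 : EuclideanSpace ℝ (Fin d) → ℝ) (x : EuclideanSpace ℝ (Fin d)) : ℝ :=
  sSup {r | ∃ z ∈ Ω, u0 z - u0 x = ‖x - z‖ ∧ r = ‖x - z‖}

open scoped RealInnerProductSpace

theorem LipschitzOnWith.sub_le_norm_sub_s6 {E : Type*} [SeminormedAddCommGroup E] {Ω : Set E}
    {u : E → ℝ} (hu : LipschitzOnWith 1 u Ω) {x y : E} (hx : x ∈ Ω) (hy : y ∈ Ω) :
    u x - u y ≤ ‖x - y‖ :=
  (le_abs_self _).trans (by simpa [Real.dist_eq, dist_eq_norm] using hu.dist_le_mul x hx y hy)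

section RaySegment

variable {E : Type*} [NormedAddCommGroup E] [NormedSpace ℝ E]

/-- `z` is the midpoint of a piece of transport ray of `u` of length `2 * t` and direction `e`. -/
structure IsRaySegment (Ω : Set E) (u : E → ℝ) (z e : E) (t : ℝ) : Prop where
  norm_eq_one : ‖e‖ = 1
  add_mem : z + t • e ∈ Ω
  sub_mem : z - t • e ∈ Ω
  apply_add : u (z + t • e) = u z + t
  apply_sub : u (z - t • e) = u z - t

theorem LipschitzOnWith.apply_add_smul_eq {Ω : Set E} {u : E → ℝ} (hΩ : Convex ℝ Ω)
    (hu : LipschitzOnWith 1 u Ω) {x e : E} {L t : ℝ} (he : ‖e‖ = 1) (hx : x ∈ Ω)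
    (hL : x + L • e ∈ Ω) (huL : u (x + L • e) = u x + L) (ht : 0 ≤ t) (htL : t ≤ L) :
    x + t • e ∈ Ω ∧ u (x + t • e) = u x + t := by
  have hmem : x + t • e ∈ Ω := by
    rcases ht.eq_or_lt with rfl | ht
    · simpa using hx
    · have hL0 : 0 < L := ht.trans_le htL
      have := hΩ.add_smul_mem hx hL ⟨div_nonneg ht.le hL0.le, (div_le_one hL0).2 htL⟩
      rwa [smul_smul, div_mul_cancel₀ _ hL0.ne'] at this
  have h₁ := hu.sub_le_norm_sub_s6 hmem hx
  have h₂ := hu.sub_le_norm_sub_s6 hL hmem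
  rw [add_sub_cancel_left, norm_smul, he, mul_one, Real.norm_of_nonneg ht] at h₁
  rw [add_sub_add_left_eq_sub, ← sub_smul, norm_smul, he, mul_one,
    Real.norm_of_nonneg (sub_nonneg.2 htL)] at h₂
  exact ⟨hmem, by linarith⟩

theorem exists_isRaySegment [StrictConvexSpace ℝ E] {Ω : Set E} {u : E → ℝ} (hΩ : Convex ℝ Ω)
    (hu : LipschitzOnWith 1 u Ω) {z a b : E} (hz : z ∈ Ω) (ha : a ∈ Ω) (hb : b ∈ Ω)
    (hza : u z - u a = ‖z - a‖) (hbz : u b - u z = ‖b - z‖) {t : ℝ} (ht : 0 < t)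
    (hta : t ≤ ‖z - a‖) (htb : t ≤ ‖b - z‖) : ∃ e, IsRaySegment Ω u z e t := by
  have hza₀ : z - a ≠ 0 := norm_pos_iff.1 (ht.trans_le hta)
  have hbz₀ : b - z ≠ 0 := norm_pos_iff.1 (ht.trans_le htb)
  -- `a, z, b` realise equality in the Lipschitz bound, hence in the triangle inequality.
  have hray : SameRay ℝ (z - a) (b - z) := by
    refine sameRay_iff_norm_add.2 (le_antisymm (norm_add_le _ _) ?_)
    rw [sub_add_sub_cancel']
    linarith [hu.sub_le_norm_sub_s6 hb ha]
  set e := ‖b - z‖⁻¹ • (b - z)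
  have he : ‖e‖ = 1 := norm_smul_inv_norm hbz₀
  have hb_eq : z + ‖b - z‖ • e = b := by
    rw [smul_smul, mul_inv_cancel₀ (norm_ne_zero_iff.2 hbz₀), one_smul, add_sub_cancel]
  have ha_eq : a + ‖z - a‖ • e = z := by
    have he' : e = ‖z - a‖⁻¹ • (z - a) := (hray.inv_norm_smul_eq hza₀ hbz₀).symm
    rw [he', smul_smul, mul_inv_cancel₀ (norm_ne_zero_iff.2 hza₀), one_smul, add_sub_cancel]
  obtain ⟨hadd, huadd⟩ := hu.apply_add_smul_eq hΩ he hz (by rwa [hb_eq]) (by rw [hb_eq]; linarith)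
    ht.le htb
  obtain ⟨hsub, husub⟩ := hu.apply_add_smul_eq hΩ he ha (by rwa [ha_eq]) (by rw [ha_eq]; linarith)
    (sub_nonneg.2 hta) (sub_le_self _ ht.le)
  have hsub_eq : a + (‖z - a‖ - t) • e = z - t • e := by
    rw [sub_smul, ← add_sub_assoc, ha_eq]
  rw [hsub_eq] at hsub husub
  exact ⟨e, he, hadd, hsub, huadd, by linarith⟩

end RaySegment

section InnerProductSpace

variable {F : Type*} [NormedAddCommGroup F] [InnerProductSpace ℝ F]

theorem norm_smul_add_le {e : F} (he : ‖e‖ = 1) {t : ℝ} (ht : 0 < t) (h : F) :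
    ‖t • e + h‖ ≤ t + ⟪e, h⟫ + ‖h‖ ^ 2 / t := by
  have hinner : |⟪e, h⟫| ≤ ‖h‖ := by simpa [he] using abs_real_inner_le_norm e h
  have hsq : ‖t • e + h‖ ^ 2 = t ^ 2 + 2 * t * ⟪e, h⟫ + ‖h‖ ^ 2 := by
    rw [norm_add_sq_real, norm_smul, real_inner_smul_left, Real.norm_of_nonneg ht.le, he]
    ring
  set q := ‖h‖ ^ 2 / t
  have hq : t * q = ‖h‖ ^ 2 := mul_div_cancel₀ _ ht.ne'
  -- `t • (t + ⟪e, h⟫ + q) ≥ t² - t‖h‖ + ‖h‖²` and the square of the right side exceeds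
  -- `‖t • e + h‖²` by `(⟪e, h⟫ + q)² + ‖h‖²`.
  have hR : 0 ≤ t + ⟪e, h⟫ + q := by
    nlinarith [neg_abs_le ⟪e, h⟫, sq_nonneg (t - ‖h‖), norm_nonneg h]
  nlinarith [sq_nonneg (⟪e, h⟫ + q), sq_nonneg ‖h‖, norm_nonneg (t • e + h)]

namespace IsRaySegment

variable {Ω : Set F} {u : F → ℝ} {z e : F} {t : ℝ}

theorem abs_sub_sub_inner_le (hs : IsRaySegment Ω u z e t) (hu : LipschitzOnWith 1 u Ω)
    (ht : 0 < t) {w : F} (hw : w ∈ Ω) :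
    |u w - u z - ⟪e, w - z⟫| ≤ ‖w - z‖ ^ 2 / t := by
  have hupper := (hu.sub_le_norm_sub_s6 hw hs.sub_mem).trans
    (le_of_eq_of_le (by abel_nf) (norm_smul_add_le hs.norm_eq_one ht (w - z)))
  have hlower := (hu.sub_le_norm_sub_s6 hs.add_mem hw).trans
    (le_of_eq_of_le (by abel_nf) (norm_smul_add_le hs.norm_eq_one ht (-(w - z))))
  rw [inner_neg_right, norm_neg] at hlower
  rw [hs.apply_sub] at hupper
  rw [hs.apply_add] at hlower
  exact abs_le.2 ⟨by linarith, by linarith⟩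

theorem hasGradientWithinAt [CompleteSpace F] (hs : IsRaySegment Ω u z e t)
    (hu : LipschitzOnWith 1 u Ω) (ht : 0 < t) : HasGradientWithinAt u e Ω z := by
  rw [hasGradientWithinAt_iff_hasFDerivWithinAt]
  refine .of_isLittleO <| Asymptotics.IsBigO.trans_isLittleO ?_
    ((Asymptotics.isLittleO_pow_sub_sub z one_lt_two).mono nhdsWithin_le_nhds)
  refine .of_bound t⁻¹ (eventually_nhdsWithin_of_forall fun w hw => ?_)
  simpa [div_eq_inv_mul] using hs.abs_sub_sub_inner_le hu ht hw

theorem mul_norm_sub_le {x y f : F} (hx : IsRaySegment Ω u x e t)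
    (hy : IsRaySegment Ω u y f t) (hu : LipschitzOnWith 1 u Ω) : t * ‖e - f‖ ≤ ‖x - y‖ := by
  rcases le_or_gt t 0 with ht | ht
  · exact (mul_nonpos_of_nonpos_of_nonneg ht (norm_nonneg _)).trans (norm_nonneg _)
  set v := x - y
  set w := t • (e + f)
  have h₁ := hu.sub_le_norm_sub_s6 hx.add_mem hy.sub_mem
  have h₂ := hu.sub_le_norm_sub_s6 hy.add_mem hx.sub_mem
  rw [hx.apply_add, hy.apply_sub, show x + t • e - (y - t • f) = w + v by
    simp only [w, v, smul_add]; abel] at h₁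
  rw [hy.apply_add, hx.apply_sub, show y + t • f - (x - t • e) = w - v by
    simp only [w, v, smul_add]; abel] at h₂
  have hpar_wv := parallelogram_law_with_norm ℝ w v
  have hpar_ef := parallelogram_law_with_norm ℝ e f
  rw [hx.norm_eq_one, hy.norm_eq_one] at hpar_ef
  have hw : ‖w‖ = t * ‖e + f‖ := by rw [norm_smul, Real.norm_of_nonneg ht.le]
  have hsum : 4 * t ≤ ‖w + v‖ + ‖w - v‖ := by linarith
  have hsq_sum : (4 * t) ^ 2 ≤ 4 * (‖w‖ ^ 2 + ‖v‖ ^ 2) := by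
    nlinarith [sq_nonneg (‖w + v‖ - ‖w - v‖), pow_le_pow_left₀ (by positivity) hsum 2]
  have hsq : (t * ‖e - f‖) ^ 2 ≤ ‖v‖ ^ 2 := by
    rw [hw] at hsq_sum
    linear_combination hsq_sum / 4 + t ^ 2 * hpar_ef
  exact abs_le_of_sq_le_sq' hsq (norm_nonneg v) |>.2

end IsRaySegment

end InnerProductSpace

section TransportRays

variable {d : ℕ} {Ω : Set (EuclideanSpace ℝ (Fin d))} {u : EuclideanSpace ℝ (Fin d) → ℝ}
  {x : EuclideanSpace ℝ (Fin d)} {t : ℝ}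

theorem exists_lt_norm_of_lt_rayLow (hx : x ∈ Ω) (ht : t < rayLow Ω u x) :
    ∃ a ∈ Ω, u x - u a = ‖x - a‖ ∧ t < ‖x - a‖ := by
  obtain ⟨_, ⟨a, ha, hxa, rfl⟩, hta⟩ := exists_lt_of_lt_csSup
    (by exact ⟨0, x, hx, by simp, by simp⟩) ht
  exact ⟨a, ha, hxa, hta⟩

theorem exists_lt_norm_of_lt_rayHigh (hx : x ∈ Ω) (ht : t < rayHigh Ω u x) :
    ∃ b ∈ Ω, u b - u x = ‖b - x‖ ∧ t < ‖b - x‖ := by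
  obtain ⟨_, ⟨b, hb, hxb, rfl⟩, htb⟩ := exists_lt_of_lt_csSup
    (by exact ⟨0, x, hx, by simp, by simp⟩) ht
  exact ⟨b, hb, norm_sub_rev x b ▸ hxb, norm_sub_rev x b ▸ htb⟩

theorem exists_isRaySegment_of_lt_min (hΩ : Convex ℝ Ω) (hu : LipschitzOnWith 1 u Ω)
    (hx : x ∈ Ω) (ht : 0 < t) (hlt : t < min (rayLow Ω u x) (rayHigh Ω u x)) :
    ∃ e, IsRaySegment Ω u x e t := by
  obtain ⟨a, ha, hxa, hta⟩ := exists_lt_norm_of_lt_rayLow hx (hlt.trans_le (min_le_left _ _))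
  obtain ⟨b, hb, hbx, htb⟩ := exists_lt_norm_of_lt_rayHigh hx (hlt.trans_le (min_le_right _ _))
  exact exists_isRaySegment hΩ hu hx ha hb hxa hbx ht hta.le htb.le

end TransportRays

theorem stmt6_general {d : ℕ} (Ω : Set (EuclideanSpace ℝ (Fin d)))
    (hΩv : Convex ℝ Ω)
    (u0 : EuclideanSpace ℝ (Fin d) → ℝ) (hu0 : LipschitzOnWith 1 u0 Ω)
    (j : ℕ) (hj : 1 ≤ j) :
    ∃ G : EuclideanSpace ℝ (Fin d) → EuclideanSpace ℝ (Fin d),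
      (∀ z ∈ {z | z ∈ Ω ∧ (1 : ℝ) / j < min (rayLow Ω u0 z) (rayHigh Ω u0 z)},
        HasGradientWithinAt u0 (G z) Ω z) ∧
      LipschitzOnWith (4 * j : NNReal) G
        {z | z ∈ Ω ∧ (1 : ℝ) / j < min (rayLow Ω u0 z) (rayHigh Ω u0 z)} := by
  have hj₀ : (0 : ℝ) < j := by exact_mod_cast hj
  have ht : (0 : ℝ) < 1 / j := by positivity
  have hray : ∀ z ∈ {z | z ∈ Ω ∧ (1 : ℝ) / j < min (rayLow Ω u0 z) (rayHigh Ω u0 z)},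
      ∃ e, IsRaySegment Ω u0 z e (1 / j) := fun z hz =>
    exists_isRaySegment_of_lt_min hΩv hu0 hz.1 ht hz.2
  choose! G hG using hray
  refine ⟨G, fun z hz => (hG z hz).hasGradientWithinAt hu0 ht,
    .of_dist_le_mul fun x hx y hy => ?_⟩
  have hle := (hG x hx).mul_norm_sub_le (hG y hy) hu0
  rw [one_div, inv_mul_le_iff₀ hj₀] at hle
  rw [dist_eq_norm, dist_eq_norm]
  push_cast
  nlinarith [norm_nonneg (x - y)]

theorem stmt6 {d : ℕ} (hd : 1 ≤ d) (Ω : Set (EuclideanSpace ℝ (Fin d)))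
    (hΩc : IsCompact Ω) (hΩv : Convex ℝ Ω)
    (u0 : EuclideanSpace ℝ (Fin d) → ℝ) (hu0 : LipschitzOnWith 1 u0 Ω)
    (j : ℕ) (hj : 1 ≤ j) :
    ∃ G : EuclideanSpace ℝ (Fin d) → EuclideanSpace ℝ (Fin d),
      (∀ z ∈ {z | z ∈ Ω ∧ (1 : ℝ) / j < min (rayLow Ω u0 z) (rayHigh Ω u0 z)},
        HasGradientWithinAt u0 (G z) Ω z) ∧
      LipschitzOnWith (4 * j : NNReal) G
        {z | z ∈ Ω ∧ (1 : ℝ) / j < min (rayLow Ω u0 z) (rayHigh Ω u0 z)} :=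
  stmt6_general Ω hΩv u0 hu0 j hj
end
end

section
/- Let Ω ⊂ ℝ^d be compact and let u0 : Ω → ℝ be 1-Lipschitz. Then the functions α and β on Ω, defined by α(x) = sup{|x − z| : z ∈ Ω, u0(x) − u0(z) = |x − z|} and β(x) = sup{|x − z| : z ∈ Ω, u0(z) − u0(x) = |x − z|}, are upper semi-continuous on Ω. -/
open MeasureTheory Set

noncomputable section

lemma rayLow_usc {d : ℕ} (Ω : Set (EuclideanSpace ℝ (Fin d)))
    (hΩc : IsCompact Ω)
    (u0 : EuclideanSpace ℝ (Fin d) → ℝ) (hu0 : LipschitzOnWith 1 u0 Ω) :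
    UpperSemicontinuousOn (rayLow Ω u0) Ω := by
  obtain ⟨C, hC⟩ := Metric.isBounded_iff.mp hΩc.isBounded
  have hbdd : ∀ x ∈ Ω, BddAbove {r | ∃ z ∈ Ω, u0 x - u0 z = ‖x - z‖ ∧ r = ‖x - z‖} := by
    intro x hx
    refine ⟨C, ?_⟩
    rintro r ⟨z, hz, -, rfl⟩
    calc ‖x - z‖ = dist x z := (dist_eq_norm x z).symm
      _ ≤ C := hC hx hz
  intro x hx y hy
  by_contra h
  rw [Filter.not_eventually] at h
  obtain ⟨v, hv_tendsto, hv⟩ := Filter.exists_seq_forall_of_frequently h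
  push_neg at hv
  -- hv : ∀ n, y ≤ rayLow Ω u0 (v n)
  have key : ∀ n : ℕ, ∃ z ∈ Ω, (v n ∈ Ω →
      u0 (v n) - u0 z = ‖v n - z‖ ∧ y - 1/(n+1) < ‖v n - z‖) := by
    intro n
    by_cases hvn : v n ∈ Ω
    · have hne : Set.Nonempty {r | ∃ z ∈ Ω, u0 (v n) - u0 z = ‖v n - z‖ ∧ r = ‖v n - z‖} :=
        ⟨0, v n, hvn, by simp⟩
      have hcalc : y - 1/(n+1) < sSup {r | ∃ z ∈ Ω, u0 (v n) - u0 z = ‖v n - z‖ ∧ r = ‖v n - z‖} := by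
        have h1 : (0:ℝ) < 1/(n+1) := by positivity
        have := hv n
        rw [rayLow] at this
        linarith
      obtain ⟨r, ⟨z, hzΩ, heq, rfl⟩, hr⟩ := exists_lt_of_lt_csSup hne hcalc
      exact ⟨z, hzΩ, fun _ => ⟨heq, hr⟩⟩
    · exact ⟨x, hx, fun hmem => absurd hmem hvn⟩
  choose z hzΩ hzP using key
  obtain ⟨w, hwΩ, φ, hφ, hwz⟩ := hΩc.tendsto_subseq hzΩ
  have hmem : ∀ᶠ n in Filter.atTop, v n ∈ Ω :=
    hv_tendsto.eventually eventually_mem_nhdsWithin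
  have hφ_top : Filter.Tendsto φ Filter.atTop Filter.atTop := hφ.tendsto_atTop
  have hvφ : Filter.Tendsto (fun n => v (φ n)) Filter.atTop (nhdsWithin x Ω) :=
    hv_tendsto.comp hφ_top
  have hmemφ : ∀ᶠ n in Filter.atTop, v (φ n) ∈ Ω := hφ_top.eventually hmem
  -- limit of u0 (v (φ n))
  have hu0x : Filter.Tendsto (fun n => u0 (v (φ n))) Filter.atTop (nhds (u0 x)) :=
    (hu0.continuousOn x hx).tendsto.comp hvφ
  have hzφ : Filter.Tendsto (fun n => z (φ n)) Filter.atTop (nhdsWithin w Ω) := by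
    rw [tendsto_nhdsWithin_iff]
    exact ⟨hwz, Filter.Eventually.of_forall fun n => hzΩ (φ n)⟩
  have hu0w : Filter.Tendsto (fun n => u0 (z (φ n))) Filter.atTop (nhds (u0 w)) :=
    (hu0.continuousOn w hwΩ).tendsto.comp hzφ
  have hvφx : Filter.Tendsto (fun n => v (φ n)) Filter.atTop (nhds x) :=
    hvφ.mono_right nhdsWithin_le_nhds
  have hzφw : Filter.Tendsto (fun n => z (φ n)) Filter.atTop (nhds w) := hwz
  have hB : Filter.Tendsto (fun n => ‖v (φ n) - z (φ n)‖) Filter.atTop (nhds ‖x - w‖) :=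
    (hvφx.sub hzφw).norm
  have hA : Filter.Tendsto (fun n => u0 (v (φ n)) - u0 (z (φ n))) Filter.atTop
      (nhds (u0 x - u0 w)) := hu0x.sub hu0w
  have hAB : ∀ᶠ n in Filter.atTop,
      (fun n => u0 (v (φ n)) - u0 (z (φ n))) n = (fun n => ‖v (φ n) - z (φ n)‖) n :=
    hmemφ.mono fun n hn => (hzP (φ n) hn).1
  have heq : u0 x - u0 w = ‖x - w‖ :=
    tendsto_nhds_unique (hA.congr' hAB) hB
  -- lower bound
  have hsmall : Filter.Tendsto (fun n : ℕ => y - 1/((φ n : ℝ)+1)) Filter.atTop (nhds y) := by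
    have h0 : Filter.Tendsto (fun n : ℕ => 1/((n:ℝ)+1)) Filter.atTop (nhds 0) :=
      tendsto_one_div_add_atTop_nhds_zero_nat
    have := (h0.comp hφ_top).const_sub y
    simpa using this
  have hyle : y ≤ ‖x - w‖ := by
    refine le_of_tendsto_of_tendsto hsmall hB ?_
    filter_upwards [hmemφ] with n hn
    exact le_of_lt (hzP (φ n) hn).2
  have hle : ‖x - w‖ ≤ rayLow Ω u0 x :=
    le_csSup (hbdd x hx) ⟨w, hwΩ, heq, rfl⟩
  linarith

theorem stmt7 {d : ℕ} (hd : 1 ≤ d) (Ω : Set (EuclideanSpace ℝ (Fin d)))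
    (hΩc : IsCompact Ω)
    (u0 : EuclideanSpace ℝ (Fin d) → ℝ) (hu0 : LipschitzOnWith 1 u0 Ω) :
    UpperSemicontinuousOn (rayLow Ω u0) Ω ∧ UpperSemicontinuousOn (rayHigh Ω u0) Ω := by
  constructor
  · exact rayLow_usc Ω hΩc u0 hu0
  · have hneg : LipschitzOnWith 1 (fun t => -u0 t) Ω := by
      intro a ha b hb
      simpa [edist_neg_neg] using hu0 ha hb
    have hEq : rayHigh Ω u0 = rayLow Ω (fun t => -u0 t) := by
      funext x
      unfold rayHigh rayLow
      congr 1
      ext r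
      constructor
      · rintro ⟨z, hz, he, rfl⟩
        exact ⟨z, hz, show (-u0 x) - (-u0 z) = ‖x - z‖ by linarith, rfl⟩
      · rintro ⟨z, hz, he, rfl⟩
        exact ⟨z, hz, by dsimp at he; linarith, rfl⟩
    rw [hEq]
    exact rayLow_usc Ω hΩc _ hneg
end
end
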